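/- arXiv:2112.02367 — 6 statements merged into one kernel-verified Lean document; each statement's English description precedes it below -/
import Mathlib

section
/- (Lemma on minimizing directions, algebraic form of the paper's Lemma 2.5/`Lemma inequality'.) Let R be a Kähler-like curvature tensor on V and let u be a unit vector that minimizes the holomorphic sectional curvature over unit vectors, i.e. H(u) ≤ H(v) for every unit vector v ∈ V. Then for every unit vector v ∈ V, the real number R(u,u,v,v) satisfies R(u,u,v,v) ≥ ((1 + |⟨u,v⟩|²)/2) · H(u). -/
/-- A Kähler-like curvature tensor on a complex vector space `V`:
a map `R : V × V × V × V → ℂ` that is complex-linear in the first and third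
arguments, conjugate-linear in the second and fourth arguments, and satisfies
the symmetries `R(X,Y,Z,W) = R(Z,Y,X,W)` and `R(X,Y,Z,W) = conj (R(Y,X,W,Z))`. -/
structure IsKahlerLike {V : Type*} [AddCommGroup V] [Module ℂ V]
    (R : V → V → V → V → ℂ) : Prop where
  add1 : ∀ X X' Y Z W, R (X + X') Y Z W = R X Y Z W + R X' Y Z W
  smul1 : ∀ (a : ℂ) (X Y Z W), R (a • X) Y Z W = a * R X Y Z W
  add2 : ∀ X Y Y' Z W, R X (Y + Y') Z W = R X Y Z W + R X Y' Z W
  smul2 : ∀ (a : ℂ) (X Y Z W), R X (a • Y) Z W = (starRingEnd ℂ) a * R X Y Z W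
  add3 : ∀ X Y Z Z' W, R X Y (Z + Z') W = R X Y Z W + R X Y Z' W
  smul3 : ∀ (a : ℂ) (X Y Z W), R X Y (a • Z) W = a * R X Y Z W
  add4 : ∀ X Y Z W W', R X Y Z (W + W') = R X Y Z W + R X Y Z W'
  smul4 : ∀ (a : ℂ) (X Y Z W), R X Y Z (a • W) = (starRingEnd ℂ) a * R X Y Z W
  sym13 : ∀ X Y Z W, R X Y Z W = R Z Y X W
  symConj : ∀ X Y Z W, R X Y Z W = (starRingEnd ℂ) (R Y X W Z)

/-!
By homogeneity, minimality of `u` means `H(x) ≥ ‖x‖⁴ H(u)` for every `x`. For `w ⟂ u` and real `s`,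
`H(u + s w) - (1 + s² ‖w‖²)² H(u)` is then a nonnegative quartic polynomial in `s` vanishing at
`0`: its linear coefficient `4 Re R(u,u,u,w)` vanishes and its quadratic coefficient is
nonnegative. Doing the same with `i w` gives `R(u,u,u,w) = 0` and `R(u,u,w,w) ≥ ‖w‖² H(u) / 2`.
Writing `v = ⟪u,v⟫ u + w` with `w ⟂ u` and `‖w‖² = 1 - |⟪u,v⟫|²`, the cross terms of `R(u,u,v,v)`
vanish and the bound follows.
-/

theorem nonneg_of_forall_pos_nonneg {f : ℝ → ℝ} (hf : ContinuousAt f 0)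
    (h : ∀ s > 0, 0 ≤ f s) : 0 ≤ f 0 :=
  ge_of_tendsto (hf.tendsto.mono_left (nhdsWithin_le_nhds (s := Set.Ioi 0)))
    (eventually_nhdsWithin_of_forall h)

theorem eq_zero_and_nonneg_of_forall_quartic_nonneg {a b c d : ℝ}
    (h : ∀ s : ℝ, 0 ≤ a * s + b * s ^ 2 + c * s ^ 3 + d * s ^ 4) : a = 0 ∧ 0 ≤ b := by
  have ha : 0 ≤ a := by
    simpa using nonneg_of_forall_pos_nonneg (f := fun s ↦ a + s * (b + s * (c + s * d)))
      (by fun_prop) fun s hs ↦ nonneg_of_mul_nonneg_right (by linear_combination h s) hs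
  have ha' : 0 ≤ -a := by
    simpa using nonneg_of_forall_pos_nonneg (f := fun s ↦ -a + s * (b - s * (c - s * d)))
      (by fun_prop) fun s hs ↦ nonneg_of_mul_nonneg_right (by linear_combination h (-s)) hs
  obtain rfl : a = 0 := by linarith
  refine ⟨rfl, ?_⟩
  simpa using nonneg_of_forall_pos_nonneg (f := fun s ↦ b + s * (c + s * d))
    (by fun_prop) fun s hs ↦ nonneg_of_mul_nonneg_right (by linear_combination h s) (pow_pos hs 2)

namespace IsKahlerLike

section Module

variable {V : Type*} [AddCommGroup V] [Module ℂ V] {R : V → V → V → V → ℂ}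

theorem apply_swap24 (hR : IsKahlerLike R) (X Y Z W : V) : R X Y Z W = R X W Z Y := by
  rw [hR.symConj, hR.sym13, ← hR.symConj]

theorem re_apply_swap (hR : IsKahlerLike R) (X Y Z W : V) :
    (R X Y Z W).re = (R Y X W Z).re := by
  rw [hR.symConj, Complex.conj_re]

theorem apply_smul_self (hR : IsKahlerLike R) (c : ℂ) (x : V) :
    R (c • x) (c • x) (c • x) (c • x) = ((‖c‖ ^ 4 : ℝ) : ℂ) * R x x x x := by
  rw [hR.smul1, hR.smul2, hR.smul3, hR.smul4]
  push_cast
  linear_combination (c * (starRingEnd ℂ) c + (‖c‖ : ℂ) ^ 2) * R x x x x * Complex.mul_conj' c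

theorem re_apply_add_ofReal_smul (hR : IsKahlerLike R) (u w : V) (s : ℝ) :
    (R (u + (s : ℂ) • w) (u + (s : ℂ) • w) (u + (s : ℂ) • w) (u + (s : ℂ) • w)).re
      = (R u u u u).re + 4 * (R u u u w).re * s
        + (4 * (R u u w w).re + 2 * (R u w u w).re) * s ^ 2
        + 4 * (R u w w w).re * s ^ 3 + (R w w w w).re * s ^ 4 := by
  simp only [hR.add1, hR.add2, hR.add3, hR.add4, hR.smul1, hR.smul2, hR.smul3, hR.smul4,
    Complex.conj_ofReal, Complex.add_re, Complex.re_ofReal_mul]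
  rw [hR.sym13 w u u u, hR.re_apply_swap u u w u, hR.apply_swap24 u w u u, hR.sym13 w w u u,
    hR.apply_swap24 u w w u, hR.sym13 w u u w, hR.re_apply_swap w u w u,
    hR.apply_swap24 w w w u, hR.re_apply_swap w u w w, hR.sym13 w w u w]
  ring

theorem re_apply_smul_add_of_apply_eq_zero (hR : IsKahlerLike R) {u w : V}
    (huw : R u u u w = 0) (a : ℂ) :
    (R u u (a • u + w) (a • u + w)).re = ‖a‖ ^ 2 * (R u u u u).re + (R u u w w).re := by
  simp only [hR.add3, hR.add4, hR.smul3, hR.smul4, hR.symConj u u w u, huw, map_zero, mul_zero,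
    add_zero, ← mul_assoc, Complex.mul_conj', ← Complex.ofReal_pow, Complex.add_re,
    Complex.re_ofReal_mul, zero_add]

end Module

section Normed

variable {V : Type*} [NormedAddCommGroup V] [NormedSpace ℂ V] {R : V → V → V → V → ℂ}

theorem norm_pow_four_mul_le_of_isMin (hR : IsKahlerLike R) {u : V}
    (hmin : ∀ v : V, ‖v‖ = 1 → (R u u u u).re ≤ (R v v v v).re) (x : V) :
    ‖x‖ ^ 4 * (R u u u u).re ≤ (R x x x x).re := by
  rcases eq_or_ne x 0 with rfl | hx0
  · have h0 : R 0 0 0 0 = 0 := by simpa using hR.smul1 0 0 0 0 0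
    simp [h0]
  have hx : 0 < ‖x‖ := norm_pos_iff.mpr hx0
  have h := hmin (((‖x‖⁻¹ : ℝ) : ℂ) • x) (by simp [norm_smul, hx.ne'])
  rw [hR.apply_smul_self, Complex.re_ofReal_mul] at h
  calc ‖x‖ ^ 4 * (R u u u u).re
      ≤ ‖x‖ ^ 4 * (‖((‖x‖⁻¹ : ℝ) : ℂ)‖ ^ 4 * (R x x x x).re) := by gcongr
    _ = (R x x x x).re := by simp [hx.ne']

end Normed

section InnerProduct

variable {V : Type*} [NormedAddCommGroup V] [InnerProductSpace ℂ V] {R : V → V → V → V → ℂ}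

theorem re_apply_eq_zero_and_le_of_inner_eq_zero (hR : IsKahlerLike R) {u w : V}
    (hu : ‖u‖ = 1) (hmin : ∀ x : V, ‖x‖ ^ 4 * (R u u u u).re ≤ (R x x x x).re)
    (huw : inner ℂ u w = 0) :
    (R u u u w).re = 0 ∧ ‖w‖ ^ 2 * (R u u u u).re ≤ 2 * (R u u w w).re + (R u w u w).re := by
  have hnorm (s : ℝ) : ‖u + (s : ℂ) • w‖ ^ 2 = 1 + s ^ 2 * ‖w‖ ^ 2 := by
    rw [sq, norm_add_sq_eq_norm_sq_add_norm_sq_of_inner_eq_zero _ _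
      (by rw [inner_smul_right, huw, mul_zero]), hu, norm_smul, Complex.norm_real,
      Real.norm_eq_abs, ← sq_abs s]
    ring
  obtain ⟨hP, hB⟩ := eq_zero_and_nonneg_of_forall_quartic_nonneg (a := 4 * (R u u u w).re)
      (b := 4 * (R u u w w).re + 2 * (R u w u w).re - 2 * ‖w‖ ^ 2 * (R u u u u).re)
      (c := 4 * (R u w w w).re) (d := (R w w w w).re - ‖w‖ ^ 4 * (R u u u u).re) fun s ↦ by
    have h := hmin (u + (s : ℂ) • w)
    rw [hR.re_apply_add_ofReal_smul, show ∀ r : ℝ, r ^ 4 = (r ^ 2) ^ 2 by intro; ring,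
      hnorm] at h
    linear_combination h
  constructor <;> linarith

theorem apply_eq_zero_and_le_of_inner_eq_zero (hR : IsKahlerLike R) {u w : V}
    (hu : ‖u‖ = 1) (hmin : ∀ x : V, ‖x‖ ^ 4 * (R u u u u).re ≤ (R x x x x).re)
    (huw : inner ℂ u w = 0) :
    R u u u w = 0 ∧ ‖w‖ ^ 2 / 2 * (R u u u u).re ≤ (R u u w w).re := by
  obtain ⟨hre, hw⟩ := hR.re_apply_eq_zero_and_le_of_inner_eq_zero hu hmin huw
  obtain ⟨him, hIw⟩ := hR.re_apply_eq_zero_and_le_of_inner_eq_zero hu hmin (w := Complex.I • w)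
    (by rw [inner_smul_right, huw, mul_zero])
  have hP : (R u u u (Complex.I • w)).re = (R u u u w).im := by simp [hR.smul4]
  have hB : R u u (Complex.I • w) (Complex.I • w) = R u u w w := by
    simp [hR.smul3, hR.smul4, ← mul_assoc]
  have hC : R u (Complex.I • w) u (Complex.I • w) = -R u w u w := by
    simp [hR.smul2, hR.smul4, ← mul_assoc]
  rw [hP] at him
  rw [hB, hC, norm_smul, Complex.norm_I, one_mul, Complex.neg_re] at hIw
  exact ⟨Complex.ext hre him, by linarith⟩

end InnerProduct

end IsKahlerLike

theorem kahlerLike_min_direction_ineq_general {V : Type*} [NormedAddCommGroup V] [InnerProductSpace ℂ V]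
    (R : V → V → V → V → ℂ) (hR : IsKahlerLike R)
    (u : V) (hu : ‖u‖ = 1)
    (hmin : ∀ v : V, ‖v‖ = 1 → (R u u u u).re ≤ (R v v v v).re) :
    ∀ v : V, ‖v‖ = 1 →
      (1 + ‖(inner ℂ u v : ℂ)‖ ^ 2) / 2 * (R u u u u).re ≤ (R u u v v).re := by
  intro v hv
  set a := inner ℂ u v
  set w := v - a • u
  have hvaw : a • u + w = v := add_sub_cancel _ _
  have huw : inner ℂ u w = 0 := by simp [w, a, inner_self_eq_norm_sq_to_K, hu]
  have hw : ‖w‖ ^ 2 = 1 - ‖a‖ ^ 2 := by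
    have := norm_add_sq_eq_norm_sq_add_norm_sq_of_inner_eq_zero (a • u) w
      (by rw [inner_smul_left, huw, mul_zero])
    rw [hvaw, hv, norm_smul, hu] at this
    linear_combination -this
  obtain ⟨hP, hB⟩ := hR.apply_eq_zero_and_le_of_inner_eq_zero hu
    (hR.norm_pow_four_mul_le_of_isMin hmin) huw
  rw [← hvaw, hR.re_apply_smul_add_of_apply_eq_zero hP]
  rw [hw] at hB
  linear_combination hB

/-- Minimizing-direction inequality: if the unit vector `u` minimizes the holomorphic
sectional curvature `H(v) = R(v,v,v,v)` over unit vectors, then for every unit vector `v` one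
has `R(u,u,v,v) ≥ ((1 + |⟨u,v⟩|²)/2) · H(u)`. -/
theorem kahlerLike_min_direction_ineq {V : Type*} [NormedAddCommGroup V] [InnerProductSpace ℂ V]
    [FiniteDimensional ℂ V]
    (R : V → V → V → V → ℂ) (hR : IsKahlerLike R)
    (u : V) (hu : ‖u‖ = 1)
    (hmin : ∀ v : V, ‖v‖ = 1 → (R u u u u).re ≤ (R v v v v).re) :
    ∀ v : V, ‖v‖ = 1 →
      (1 + ‖(inner ℂ u v : ℂ)‖ ^ 2) / 2 * (R u u u u).re ≤ (R u u v v).re :=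
  kahlerLike_min_direction_ineq_general R hR u hu hmin
end

section
/- (First-order condition at a minimizing direction; step (4) in the proof of the paper's Lemma on holomorphic sectional curvature.) Let R be a Kähler-like curvature tensor on V and let u be a unit vector with H(u) ≤ H(v) for every unit vector v ∈ V. Then for every unit vector w ∈ V with ⟨w,u⟩ = 0, one has R(u,u,u,w) = 0 and R(u,u,w,u) = 0 (here u occupies all remaining slots, and w occupies the fourth and third slot respectively). -/
open Polynomial ComplexConjugate

theorem Polynomial.coeff_one_eq_zero_of_forall_eval_zero_le (p : ℝ[X])
    (h : ∀ t, p.eval 0 ≤ p.eval t) : p.coeff 1 = 0 := by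
  have hmin : IsLocalMin (fun t => p.eval t) 0 := Filter.Eventually.of_forall h
  simpa [← coeff_zero_eq_eval_zero, coeff_derivative] using
    hmin.hasDerivAt_eq_zero (p.hasDerivAt 0)

theorem norm_add_ofReal_smul_sq_of_inner_eq_zero {V : Type*} [NormedAddCommGroup V]
    [InnerProductSpace ℂ V] {x y : V} (h : inner ℂ y x = 0) (t : ℝ) :
    ‖x + (t : ℂ) • y‖ ^ 2 = ‖x‖ ^ 2 + t ^ 2 * ‖y‖ ^ 2 := by
  have hxy : inner ℂ x ((t : ℂ) • y) = 0 := by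
    rw [inner_smul_right, inner_eq_zero_symm.mp h, mul_zero]
  rw [sq, sq, sq, norm_add_sq_eq_norm_sq_add_norm_sq_of_inner_eq_zero _ _ hxy, norm_smul,
    Complex.norm_real, Real.norm_eq_abs]
  nlinarith [sq_abs t]

namespace IsKahlerLike

section Algebraic

variable {V : Type*} [AddCommGroup V] [Module ℂ V] {R : V → V → V → V → ℂ}

theorem apply_ofReal_smul_self (hR : IsKahlerLike R) (c : ℝ) (v : V) :
    R ((c : ℂ) • v) ((c : ℂ) • v) ((c : ℂ) • v) ((c : ℂ) • v) = (c : ℂ) ^ 4 * R v v v v := by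
  simp only [hR.smul1, hR.smul2, hR.smul3, hR.smul4, Complex.conj_ofReal]
  ring

theorem apply_zero (hR : IsKahlerLike R) : R 0 0 0 0 = 0 := by
  simpa using hR.apply_ofReal_smul_self 0 0

/-- The Kähler symmetries identify the four first-order terms with `R(x,x,y,x)` or its
conjugate. -/
theorem exists_apply_add_ofReal_smul_self (hR : IsKahlerLike R) (x y : V) :
    ∃ c₂ c₃ c₄ : ℂ, ∀ t : ℝ,
      R (x + (t : ℂ) • y) (x + (t : ℂ) • y) (x + (t : ℂ) • y) (x + (t : ℂ) • y) =
        R x x x x + t * ((4 * (R x x y x).re : ℝ) : ℂ) + t ^ 2 * c₂ + t ^ 3 * c₃ + t ^ 4 * c₄ := by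
  refine ⟨R y y x x + R y x y x + R y x x y + R x y y x + R x y x y + R x x y y,
    R y y y x + R y y x y + R y x y y + R x y y y, R y y y y, fun t => ?_⟩
  have h₁ : R y x x x = R x x y x := hR.sym13 y x x x
  have h₂ : R x y x x = conj (R x x y x) := by rw [hR.symConj x y x x, h₁]
  have h₃ : R x x x y = conj (R x x y x) := hR.symConj x x x y
  simp only [hR.add1, hR.add2, hR.add3, hR.add4, hR.smul1, hR.smul2, hR.smul3, hR.smul4,
    Complex.conj_ofReal, h₁, h₂, h₃]
  have h₄ : ((4 * (R x x y x).re : ℝ) : ℂ) = 2 * (R x x y x + conj (R x x y x)) := by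
    rw [Complex.add_conj]; push_cast; ring
  rw [h₄]
  ring

end Algebraic

section Normed

variable {V : Type*} [NormedAddCommGroup V] [InnerProductSpace ℂ V] {R : V → V → V → V → ℂ}

theorem mul_norm_pow_four_le_re_apply (hR : IsKahlerLike R) {m : ℝ}
    (h : ∀ v : V, ‖v‖ = 1 → m ≤ (R v v v v).re) (v : V) :
    m * ‖v‖ ^ 4 ≤ (R v v v v).re := by
  rcases eq_or_ne v 0 with rfl | hv
  · simp [hR.apply_zero]
  have hv₀ : 0 < ‖v‖ := norm_pos_iff.mpr hv
  set v₁ : V := ((‖v‖⁻¹ : ℝ) : ℂ) • v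
  have hv₁ : ‖v₁‖ = 1 := by
    rw [norm_smul, Complex.norm_real, Real.norm_eq_abs, abs_of_pos (inv_pos.mpr hv₀),
      inv_mul_cancel₀ hv₀.ne']
  have hv_eq : v = ((‖v‖ : ℝ) : ℂ) • v₁ := by
    rw [smul_smul, ← Complex.ofReal_mul, mul_inv_cancel₀ hv₀.ne', Complex.ofReal_one, one_smul]
  rw [hv_eq, hR.apply_ofReal_smul_self, ← Complex.ofReal_pow, Complex.re_ofReal_mul,
    norm_smul, Complex.norm_real, Real.norm_eq_abs, abs_norm, hv₁, mul_one, mul_comm]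
  exact mul_le_mul_of_nonneg_left (h v₁ hv₁) (by positivity)

theorem re_apply_eq_zero_of_inner_eq_zero (hR : IsKahlerLike R) {m : ℝ} {u y : V}
    (hmin : ∀ v : V, m * ‖v‖ ^ 4 ≤ (R v v v v).re) (hu : (R u u u u).re = m * ‖u‖ ^ 4)
    (hy : inner ℂ y u = 0) : (R u u y u).re = 0 := by
  obtain ⟨c₂, c₃, c₄, hexp⟩ := hR.exists_apply_add_ofReal_smul_self u y
  let p : ℝ[X] := C (4 * (R u u y u).re) * X + C (c₂.re - 2 * m * ‖u‖ ^ 2 * ‖y‖ ^ 2) * X ^ 2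
    + C c₃.re * X ^ 3 + C (c₄.re - m * ‖y‖ ^ 4) * X ^ 4
  have hp : ∀ t : ℝ, p.eval t =
      (R (u + (t : ℂ) • y) (u + (t : ℂ) • y) (u + (t : ℂ) • y) (u + (t : ℂ) • y)).re
        - m * ‖u + (t : ℂ) • y‖ ^ 4 := by
    intro t
    rw [hexp, show ‖u + (t : ℂ) • y‖ ^ 4 = (‖u + (t : ℂ) • y‖ ^ 2) ^ 2 by ring,
      norm_add_ofReal_smul_sq_of_inner_eq_zero hy]
    simp only [p, eval_add, eval_mul, eval_C, eval_X, eval_pow, Complex.add_re,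
      Complex.re_ofReal_mul, Complex.ofReal_re, ← Complex.ofReal_pow, hu]
    ring
  have hcoeff := p.coeff_one_eq_zero_of_forall_eval_zero_le fun t => by
    rw [hp, hp]
    simp only [Complex.ofReal_zero, zero_smul, add_zero, hu]
    linarith [hmin (u + (t : ℂ) • y)]
  simp only [p, coeff_add, coeff_C_mul, coeff_X_pow, coeff_X_one] at hcoeff
  simpa using hcoeff

end Normed

end IsKahlerLike

theorem kahlerLike_min_first_order_general {V : Type*} [NormedAddCommGroup V] [InnerProductSpace ℂ V]
    (R : V → V → V → V → ℂ) (hR : IsKahlerLike R)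
    (u : V) (hu : ‖u‖ = 1)
    (hmin : ∀ v : V, ‖v‖ = 1 → (R u u u u).re ≤ (R v v v v).re) :
    ∀ w : V, ‖w‖ = 1 → (inner ℂ w u : ℂ) = 0 →
      R u u u w = 0 ∧ R u u w u = 0 := by
  intro w _ hwu
  have hA : (R u u (conj (R u u w u) • w) u).re = 0 :=
    hR.re_apply_eq_zero_of_inner_eq_zero (hR.mul_norm_pow_four_le_re_apply hmin)
      (by rw [hu]; ring) (by rw [inner_smul_left, hwu, mul_zero])
  have hwu_zero : R u u w u = 0 := by
    rw [hR.smul3, mul_comm, Complex.mul_conj'] at hA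
    norm_cast at hA
    simpa using hA
  exact ⟨by rw [hR.symConj, hwu_zero, map_zero], hwu_zero⟩

/-- First-order condition at a minimizing direction: if the unit vector `u` minimizes the
holomorphic sectional curvature over unit vectors, then for every unit vector `w` orthogonal
to `u` one has `R(u,u,u,w) = 0` and `R(u,u,w,u) = 0`. -/
theorem kahlerLike_min_first_order {V : Type*} [NormedAddCommGroup V] [InnerProductSpace ℂ V]
    [FiniteDimensional ℂ V]
    (R : V → V → V → V → ℂ) (hR : IsKahlerLike R)
    (u : V) (hu : ‖u‖ = 1)
    (hmin : ∀ v : V, ‖v‖ = 1 → (R u u u u).re ≤ (R v v v v).re) :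
    ∀ w : V, ‖w‖ = 1 → (inner ℂ w u : ℂ) = 0 →
      R u u u w = 0 ∧ R u u w u = 0 :=
  kahlerLike_min_first_order_general R hR u hu hmin
end

section
/- (Second-order condition at a minimizing direction; step (5) in the proof of the paper's Lemma on holomorphic sectional curvature.) Let R be a Kähler-like curvature tensor on V and let u be a unit vector with H(u) ≤ H(v) for every unit vector v ∈ V. Then for every unit vector w ∈ V with ⟨w,u⟩ = 0, the real number R(u,u,w,w) satisfies 2·R(u,u,w,w) ≥ H(u) = R(u,u,u,u). -/
/-!
Perturb the minimizer `u` along the circle `u + z • w`, `|z| = t`. Since `w ⊥ u`, minimality gives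
`H(u + z • w) ≥ (1 + t²)² H(u)`. Averaging over `z ∈ t • {1, i, -1, -i}` removes every term of
`H(u + z • w)` except `H(u) + 4 t² Re R(u,u,w,w) + t⁴ H(w)`, so
`(2t² + t⁴) H(u) ≤ 4 t² Re R(u,u,w,w) + t⁴ H(w)`; divide by `t²` and let `t → 0`.
-/

open Complex ComplexConjugate

/-- `R(v,v,v,v)`, which is the holomorphic sectional curvature `H(v)` when `‖v‖ = 1`. -/
def holSecCurv {V : Type*} (R : V → V → V → V → ℂ) (v : V) : ℝ := (R v v v v).re

namespace IsKahlerLike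

variable {V : Type*} {R : V → V → V → V → ℂ}

section Module

variable [AddCommGroup V] [Module ℂ V] (hR : IsKahlerLike R)
include hR

theorem holSecCurv_smul (a : ℂ) (v : V) : holSecCurv R (a • v) = ‖a‖ ^ 4 * holSecCurv R v := by
  have h : a * (conj a * (a * (conj a * R v v v v))) = ((‖a‖ ^ 4 : ℝ) : ℂ) * R v v v v := by
    rw [show ‖a‖ ^ 4 = (‖a‖ ^ 2) ^ 2 by ring]
    push_cast
    rw [← mul_conj']
    ring
  rw [holSecCurv, hR.smul1, hR.smul2, hR.smul3, hR.smul4, h, re_ofReal_mul, holSecCurv]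

theorem re_sum_mixed_eq_four_mul (u w : V) :
    (R w w u u + R w u u w + R u w w u + R u u w w).re = 4 * (R u u w w).re := by
  have h₁ : R w u u w = R u u w w := hR.sym13 w u u w
  have h₂ : R w w u u = R u w w u := hR.sym13 w w u u
  have h₃ : (R u w w u).re = (R w u u w).re := by rw [hR.symConj u w w u, conj_re]
  simp only [add_re]
  rw [h₂, h₃, h₁]
  ring

theorem sum_holSecCurv_add_rotations (u w : V) (t : ℝ) :
    ∑ k ∈ Finset.range 4, holSecCurv R (u + (I ^ k * t) • w) =
      4 * holSecCurv R u + 16 * t ^ 2 * (R u u w w).re + 4 * t ^ 4 * holSecCurv R w := by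
  -- Over `z ∈ t • {1, i, -1, -i}` the monomial `z ^ a * conj z ^ b` (`a, b ≤ 2`) averages to zero
  -- unless `a = b`: only the terms with as many `w`s in the linear slots as in the antilinear
  -- ones survive.
  have hexp : ∑ k ∈ Finset.range 4,
      R (u + (I ^ k * t) • w) (u + (I ^ k * t) • w) (u + (I ^ k * t) • w) (u + (I ^ k * t) • w) =
        (4 : ℝ) * R u u u u + (4 * t ^ 2 : ℝ) * (R w w u u + R w u u w + R u w w u + R u u w w)
          + (4 * t ^ 4 : ℝ) * R w w w w := by
    have hI3 : I ^ 3 = -I := by rw [pow_succ, I_sq, neg_one_mul]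
    simp only [Finset.sum_range_succ, Finset.sum_range_zero, pow_zero, pow_one, I_sq, hI3,
      hR.add1, hR.add2, hR.add3, hR.add4, hR.smul1, hR.smul2, hR.smul3, hR.smul4,
      map_mul, map_neg, map_one, conj_I, conj_ofReal]
    push_cast
    ring_nf
    simp only [I_sq, I_pow_four]
    ring
  have hre := congrArg re hexp
  simp only [re_sum, add_re, re_ofReal_mul, hR.re_sum_mixed_eq_four_mul] at hre
  simp only [holSecCurv, hre]
  ring

end Module

section Normed

variable [NormedAddCommGroup V] [NormedSpace ℂ V] (hR : IsKahlerLike R)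
include hR

theorem norm_pow_four_mul_le_holSecCurv {u : V}
    (hmin : ∀ v : V, ‖v‖ = 1 → holSecCurv R u ≤ holSecCurv R v) (v : V) :
    ‖v‖ ^ 4 * holSecCurv R u ≤ holSecCurv R v := by
  rcases eq_or_ne v 0 with rfl | hv
  · have h0 : holSecCurv R (0 : V) = 0 := by simpa using hR.holSecCurv_smul 0 (0 : V)
    simp [h0]
  · have hx : ‖(‖v‖⁻¹ : ℂ) • v‖ = 1 := norm_smul_inv_norm hv
    calc ‖v‖ ^ 4 * holSecCurv R u ≤ ‖v‖ ^ 4 * holSecCurv R ((‖v‖⁻¹ : ℂ) • v) := by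
          gcongr
          exact hmin _ hx
      _ = holSecCurv R v := by
          rw [hR.holSecCurv_smul, ← mul_assoc, norm_inv, norm_real, norm_norm, ← mul_pow,
            mul_inv_cancel₀ (norm_ne_zero_iff.mpr hv), one_pow, one_mul]

end Normed

end IsKahlerLike

theorem nonpos_of_forall_le_sq_mul {c d : ℝ} (h : ∀ t : ℝ, t ≠ 0 → c ≤ t ^ 2 * d) : c ≤ 0 := by
  have hlim : Filter.Tendsto (fun t : ℝ => t ^ 2 * d) (nhdsWithin 0 {0}ᶜ) (nhds 0) := by
    refine Filter.Tendsto.mono_left ?_ nhdsWithin_le_nhds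
    exact ((continuous_pow 2).mul continuous_const).tendsto' 0 0 (by simp)
  exact ge_of_tendsto hlim (eventually_nhdsWithin_of_forall h)

theorem kahlerLike_min_second_order_general {V : Type*} [NormedAddCommGroup V] [InnerProductSpace ℂ V]
    (R : V → V → V → V → ℂ) (hR : IsKahlerLike R)
    (u : V) (hu : ‖u‖ = 1)
    (hmin : ∀ v : V, ‖v‖ = 1 → (R u u u u).re ≤ (R v v v v).re) :
    ∀ w : V, ‖w‖ = 1 → (inner ℂ w u : ℂ) = 0 →
      (R u u u u).re ≤ 2 * (R u u w w).re := by
  intro w hw hwu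
  have hnorm (z : ℂ) : ‖u + z • w‖ ^ 2 = 1 + ‖z‖ ^ 2 := by
    have huw : inner ℂ u (z • w) = 0 := by
      rw [inner_smul_right, inner_eq_zero_symm.mp hwu, mul_zero]
    rw [sq, norm_add_sq_eq_norm_sq_add_norm_sq_of_inner_eq_zero _ _ huw, norm_smul, hu, hw]
    ring
  suffices 2 * holSecCurv R u - 4 * (R u u w w).re ≤ 0 by unfold holSecCurv at this; linarith
  refine nonpos_of_forall_le_sq_mul (d := holSecCurv R w - holSecCurv R u) fun t ht => ?_
  have hbound : 4 * (1 + t ^ 2) ^ 2 * holSecCurv R u ≤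
      ∑ k ∈ Finset.range 4, holSecCurv R (u + (I ^ k * t) • w) := by
    rw [show 4 * (1 + t ^ 2) ^ 2 * holSecCurv R u =
      ∑ k ∈ Finset.range 4, (1 + t ^ 2) ^ 2 * holSecCurv R u by
        rw [Finset.sum_const, Finset.card_range, nsmul_eq_mul]; push_cast; ring]
    gcongr with k
    have h := hR.norm_pow_four_mul_le_holSecCurv hmin (u + (I ^ k * t) • w)
    rwa [show (4 : ℕ) = 2 * 2 from rfl, pow_mul, hnorm, norm_mul, norm_pow, norm_I, one_pow,
      one_mul, norm_real, Real.norm_eq_abs, sq_abs] at h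
  rw [hR.sum_holSecCurv_add_rotations] at hbound
  have : t ^ 2 * (2 * holSecCurv R u - 4 * (R u u w w).re) ≤
      t ^ 2 * (t ^ 2 * (holSecCurv R w - holSecCurv R u)) := by nlinarith
  exact le_of_mul_le_mul_left this (by positivity)

/-- Second-order condition at a minimizing direction: if the unit vector `u` minimizes the
holomorphic sectional curvature over unit vectors, then for every unit vector `w` orthogonal
to `u` one has `2·R(u,u,w,w) ≥ H(u) = R(u,u,u,u)`. -/
theorem kahlerLike_min_second_order {V : Type*} [NormedAddCommGroup V] [InnerProductSpace ℂ V]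
    [FiniteDimensional ℂ V]
    (R : V → V → V → V → ℂ) (hR : IsKahlerLike R)
    (u : V) (hu : ‖u‖ = 1)
    (hmin : ∀ v : V, ‖v‖ = 1 → (R u u u u).re ≤ (R v v v v).re) :
    ∀ w : V, ‖w‖ = 1 → (inner ℂ w u : ℂ) = 0 →
      (R u u u u).re ≤ 2 * (R u u w w).re :=
  kahlerLike_min_second_order_general R hR u hu hmin
end

section
/- (Second-order condition at a maximizing direction; step (5) in the proof of the paper's Lemma on holomorphic sectional curvature.) Let R be a Kähler-like curvature tensor on V and let u be a unit vector with H(u) ≥ H(v) for every unit vector v ∈ V. Then for every unit vector w ∈ V with ⟨w,u⟩ = 0, the real number R(u,u,w,w) satisfies 2·R(u,u,w,w) ≤ H(u) = R(u,u,u,u). -/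
open Complex

theorem norm_smul_add_smul_of_inner_eq_zero {V : Type*} [NormedAddCommGroup V]
    [InnerProductSpace ℂ V] {u w : V} (hu : ‖u‖ = 1) (hw : ‖w‖ = 1) (huw : inner ℂ u w = 0)
    {a b : ℂ} (hab : ‖a‖ ^ 2 + ‖b‖ ^ 2 = 1) : ‖a • u + b • w‖ = 1 := by
  have horth : inner ℂ (a • u) (b • w) = 0 := by simp [huw]
  rw [← pow_eq_one_iff_of_nonneg (norm_nonneg _) two_ne_zero, sq,
    norm_add_sq_eq_norm_sq_add_norm_sq_of_inner_eq_zero _ _ horth]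
  simpa [norm_smul, hu, hw, sq] using hab

theorem nonpos_of_forall_le_mul {α : Type*} [Field α] [LinearOrder α] [IsStrictOrderedRing α]
    {a b : α} (h : ∀ x, 0 < x → x ≤ 1 → a ≤ x * b) : a ≤ 0 := by
  by_contra! ha
  set x := a / (|b| + a)
  have hden : 0 < |b| + a := by positivity
  have hx : x * (|b| + a) = a := div_mul_cancel₀ a hden.ne'
  have hx0 : 0 < x := div_pos ha hden
  have hx1 : x ≤ 1 := (div_le_one hden).2 (by linarith [abs_nonneg b])
  nlinarith [h x hx0 hx1, mul_le_mul_of_nonneg_left (le_abs_self b) hx0.le, mul_pos hx0 ha]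

namespace IsKahlerLike

section

variable {V : Type*} [AddCommGroup V] [Module ℂ V] {R : V → V → V → V → ℂ}

theorem mixed_sum_eq_four_mul_re (hR : IsKahlerLike R) (u w : V) :
    R u u w w + R u w w u + R w u u w + R w w u u = 4 * (R u u w w).re := by
  rw [hR.sym13 w w u u, hR.sym13 w u u w, hR.symConj u w w u, hR.sym13 w u u w]
  have h := add_conj (R u u w w)
  push_cast at h
  linear_combination 2 * h

theorem sum_four_phases (hR : IsKahlerLike R) (u w : V) (c s : ℝ) :
    let v : ℂ → V := fun ζ => (c : ℂ) • u + ((s : ℂ) * ζ) • w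
    R (v 1) (v 1) (v 1) (v 1) + R (v (-1)) (v (-1)) (v (-1)) (v (-1))
      + R (v I) (v I) (v I) (v I) + R (v (-I)) (v (-I)) (v (-I)) (v (-I))
      = 4 * c ^ 4 * R u u u u + 4 * c ^ 2 * s ^ 2 * (R u u w w + R u w w u + R w u u w + R w w u u)
        + 4 * s ^ 4 * R w w w w := by
  intro v
  simp only [v, hR.add1, hR.add2, hR.add3, hR.add4, hR.smul1, hR.smul2, hR.smul3, hR.smul4,
    map_neg, map_mul, map_one, conj_ofReal, conj_I]
  ring_nf
  simp only [I_sq, I_pow_four]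
  ring

end

variable {V : Type*} [NormedAddCommGroup V] [InnerProductSpace ℂ V] {R : V → V → V → V → ℂ}

theorem re_apply_great_circle_le (hR : IsKahlerLike R) {u w : V}
    (hmax : ∀ v : V, ‖v‖ = 1 → (R v v v v).re ≤ (R u u u u).re)
    (hu : ‖u‖ = 1) (hw : ‖w‖ = 1) (huw : inner ℂ u w = 0) {x : ℝ} (hx0 : 0 ≤ x) (hx1 : x ≤ 1) :
    (1 - x) ^ 2 * (R u u u u).re + 4 * x * (1 - x) * (R u u w w).re + x ^ 2 * (R w w w w).re
      ≤ (R u u u u).re := by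
  have hc : √(1 - x) ^ 2 = 1 - x := Real.sq_sqrt (by linarith)
  have hs : √x ^ 2 = x := Real.sq_sqrt hx0
  have hmax' (ζ : ℂ) (hζ : ‖ζ‖ = 1) :=
    hmax _ <| norm_smul_add_smul_of_inner_eq_zero hu hw huw (a := √(1 - x)) (b := √x * ζ)
      (by simp [hζ, hc, hs])
  have hsum := congrArg re (hR.sum_four_phases u w √(1 - x) √x)
  simp only [hR.mixed_sum_eq_four_mul_re, add_re, re_ofReal_mul, ← ofReal_pow, ← ofReal_mul, ← ofReal_ofNat,
    ofReal_re] at hsum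
  rw [show √(1 - x) ^ 4 = (√(1 - x) ^ 2) ^ 2 by ring, show √x ^ 4 = (√x ^ 2) ^ 2 by ring, hc, hs]
    at hsum
  linarith [hmax' 1 (by simp), hmax' (-1) (by simp), hmax' I (by simp), hmax' (-I) (by simp)]

end IsKahlerLike

theorem kahlerLike_max_second_order_general {V : Type*} [NormedAddCommGroup V] [InnerProductSpace ℂ V]
    (R : V → V → V → V → ℂ) (hR : IsKahlerLike R)
    (u : V) (hu : ‖u‖ = 1)
    (hmax : ∀ v : V, ‖v‖ = 1 → (R v v v v).re ≤ (R u u u u).re) :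
    ∀ w : V, ‖w‖ = 1 → (inner ℂ w u : ℂ) = 0 →
      2 * (R u u w w).re ≤ (R u u u u).re := by
  intro w hw hwu
  have slope_le (x : ℝ) (hx0 : 0 < x) (hx1 : x ≤ 1) :
      4 * (R u u w w).re - 2 * (R u u u u).re
        ≤ x * (4 * (R u u w w).re - (R u u u u).re - (R w w w w).re) := by
    have h := hR.re_apply_great_circle_le hmax hu hw (inner_eq_zero_symm.mp hwu) hx0.le hx1
    refine sub_nonpos.mp (nonpos_of_mul_nonpos_right ?_ hx0)
    linear_combination h
  linarith [nonpos_of_forall_le_mul slope_le]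

/-- Second-order condition at a maximizing direction: if the unit vector `u` maximizes the
holomorphic sectional curvature over unit vectors, then for every unit vector `w` orthogonal
to `u` one has `2·R(u,u,w,w) ≤ H(u) = R(u,u,u,u)`. -/
theorem kahlerLike_max_second_order {V : Type*} [NormedAddCommGroup V] [InnerProductSpace ℂ V]
    [FiniteDimensional ℂ V]
    (R : V → V → V → V → ℂ) (hR : IsKahlerLike R)
    (u : V) (hu : ‖u‖ = 1)
    (hmax : ∀ v : V, ‖v‖ = 1 → (R v v v v).re ≤ (R u u u u).re) :
    ∀ w : V, ‖w‖ = 1 → (inner ℂ w u : ℂ) = 0 →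
      2 * (R u u w w).re ≤ (R u u u u).re :=
  kahlerLike_max_second_order_general R hR u hu hmax
end

section
/- (Eigenvalue lower bound used in the proof of the paper's Theorem 3.1(1).) Let R be a Kähler-like curvature tensor on V and let u be a unit vector with H(u) ≤ H(v) for every unit vector v ∈ V, and suppose H(u) ≥ 0. Then for every unit vector v ∈ V, the real number R(u,u,v,v) satisfies R(u,u,v,v) ≥ H(u)/2. (In particular, every eigenvalue of the Hermitian form (v,w) ↦ R(u,u,v,w) on V is at least H(u)/2.) -/
private lemma quartic_aux (γ β ε δ : ℝ)
    (h : ∀ t : ℝ, 0 ≤ γ * t + β * t ^ 2 + ε * t ^ 3 + δ * t ^ 4) :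
    γ = 0 ∧ 0 ≤ β := by
  have key : ∀ s : ℝ, 0 < s → s ≤ 1 → |γ| ≤ (|β| + |ε| + |δ|) * s := by
    intro s hs hs1
    have h1 := h s
    have h2 := h (-s)
    have e3 : s ^ 3 ≤ s ^ 2 := by nlinarith
    have e4 : s ^ 4 ≤ s ^ 2 := by nlinarith
    have b1 : β * s ^ 2 ≤ |β| * s ^ 2 :=
      mul_le_mul_of_nonneg_right (le_abs_self β) (by positivity)
    have b2 : ε * s ^ 3 ≤ |ε| * s ^ 2 := by
      calc ε * s ^ 3 ≤ |ε| * s ^ 3 :=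
            mul_le_mul_of_nonneg_right (le_abs_self ε) (by positivity)
        _ ≤ |ε| * s ^ 2 := mul_le_mul_of_nonneg_left e3 (abs_nonneg ε)
    have b2' : -(ε * s ^ 3) ≤ |ε| * s ^ 2 := by
      calc -(ε * s ^ 3) = (-ε) * s ^ 3 := by ring
        _ ≤ |ε| * s ^ 3 :=
            mul_le_mul_of_nonneg_right (neg_le_abs ε) (by positivity)
        _ ≤ |ε| * s ^ 2 := mul_le_mul_of_nonneg_left e3 (abs_nonneg ε)
    have b3 : δ * s ^ 4 ≤ |δ| * s ^ 2 := by
      calc δ * s ^ 4 ≤ |δ| * s ^ 4 :=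
            mul_le_mul_of_nonneg_right (le_abs_self δ) (by positivity)
        _ ≤ |δ| * s ^ 2 := mul_le_mul_of_nonneg_left e4 (abs_nonneg δ)
    rw [abs_le]
    constructor
    · have hh : -γ * s ≤ ((|β| + |ε| + |δ|) * s) * s := by nlinarith
      have := (mul_le_mul_iff_left₀ hs).mp hh
      linarith
    · have hh : γ * s ≤ ((|β| + |ε| + |δ|) * s) * s := by nlinarith
      have := (mul_le_mul_iff_left₀ hs).mp hh
      linarith
  have hγ : γ = 0 := by
    by_contra hγ
    have hγ' : 0 < |γ| := abs_pos.mpr hγ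
    have hK0 : 0 ≤ |β| + |ε| + |δ| := by positivity
    have hspos : 0 < min 1 (|γ| / (2 * (|β| + |ε| + |δ| + 1))) :=
      lt_min one_pos (by positivity)
    have h1 := key _ hspos (min_le_left _ _)
    have h2 : (|β| + |ε| + |δ|) * min 1 (|γ| / (2 * (|β| + |ε| + |δ| + 1)))
        ≤ (|β| + |ε| + |δ| + 1) * (|γ| / (2 * (|β| + |ε| + |δ| + 1))) :=
      mul_le_mul (by linarith) (min_le_right _ _) (le_of_lt hspos) (by linarith)
    have h3 : (|β| + |ε| + |δ| + 1) * (|γ| / (2 * (|β| + |ε| + |δ| + 1))) = |γ| / 2 := by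
      field_simp
    linarith
  refine ⟨hγ, ?_⟩
  subst hγ
  have g : ∀ s : ℝ, 0 ≤ β * s ^ 2 + δ * s ^ 4 := by
    intro s
    have h1 := h s
    have h2 := h (-s)
    nlinarith
  by_contra hβ
  push_neg at hβ
  rcases le_or_gt δ 0 with hδ | hδ
  · have := g 1; nlinarith
  · have hx : 0 < -β / (2 * δ) := div_pos (by linarith) (by linarith)
    have hs := g (Real.sqrt (-β / (2 * δ)))
    have hsq : (Real.sqrt (-β / (2 * δ))) ^ 2 = -β / (2 * δ) :=
      Real.sq_sqrt (le_of_lt hx)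
    have h4 : (Real.sqrt (-β / (2 * δ))) ^ 4 = (-β / (2 * δ)) ^ 2 := by
      rw [show (4 : ℕ) = 2 * 2 from rfl, pow_mul, hsq]
    rw [hsq, h4] at hs
    have e1 : β * (-β / (2 * δ)) + δ * (-β / (2 * δ)) ^ 2 = (β / 2) * (-β / (2 * δ)) := by
      field_simp
      ring
    rw [e1] at hs
    nlinarith

private lemma expand_re {V : Type*} [AddCommGroup V] [Module ℂ V]
    (R : V → V → V → V → ℂ) (hR : IsKahlerLike R) (u w : V) (t : ℝ) :
    (R (u + (t : ℂ) • w) (u + (t : ℂ) • w) (u + (t : ℂ) • w) (u + (t : ℂ) • w)).re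
      = (R u u u u).re + 4 * t * (R w u u u).re
        + t ^ 2 * (4 * (R u u w w).re + 2 * (R w u w u).re)
        + 4 * t ^ 3 * (R u w w w).re + t ^ 4 * (R w w w w).re := by
  have h2 : R u u w u = R w u u u := hR.sym13 u u w u
  have h1 : R u w u u = (starRingEnd ℂ) (R w u u u) := hR.symConj u w u u
  have h3 : R u u u w = (starRingEnd ℂ) (R w u u u) := by
    rw [hR.symConj u u u w, h2]
  have h4 : R w u u w = R u u w w := hR.sym13 w u u w
  have h5 : R u w w u = (starRingEnd ℂ) (R u u w w) := by
    rw [hR.symConj u w w u, h4]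
  have h6 : R w w u u = (starRingEnd ℂ) (R u u w w) := by
    rw [hR.sym13 w w u u, h5]
  have h7 : R u w u w = (starRingEnd ℂ) (R w u w u) := hR.symConj u w u w
  have h8 : R w w u w = R u w w w := hR.sym13 w w u w
  have h9 : R w w w u = (starRingEnd ℂ) (R u w w w) := by
    rw [hR.symConj w w w u, h8]
  have h10 : R w u w w = (starRingEnd ℂ) (R u w w w) := hR.symConj w u w w
  have key : R (u + (t : ℂ) • w) (u + (t : ℂ) • w) (u + (t : ℂ) • w) (u + (t : ℂ) • w)
      = R u u u u
        + (t : ℂ) * (2 * R w u u u + 2 * (starRingEnd ℂ) (R w u u u))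
        + ((t : ℂ)) ^ 2 * (2 * R u u w w + 2 * (starRingEnd ℂ) (R u u w w)
            + R w u w u + (starRingEnd ℂ) (R w u w u))
        + ((t : ℂ)) ^ 3 * (2 * R u w w w + 2 * (starRingEnd ℂ) (R u w w w))
        + ((t : ℂ)) ^ 4 * R w w w w := by
    simp only [hR.add1, hR.add2, hR.add3, hR.add4, hR.smul1, hR.smul2, hR.smul3, hR.smul4,
      Complex.conj_ofReal]
    rw [h1, h2, h3, h4, h5, h6, h7, h8, h9, h10]
    ring
  rw [key]
  have hre : ∀ (z : ℂ) (k : ℕ), (((t : ℂ)) ^ k * z).re = t ^ k * z.re := by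
    intro z k
    rw [← Complex.ofReal_pow, Complex.re_ofReal_mul]
  simp only [Complex.add_re, hre, Complex.re_ofReal_mul, Complex.add_re, Complex.mul_re,
    Complex.conj_re, Complex.conj_im]
  simp [Complex.ofReal_re]
  ring

/-- Eigenvalue lower bound: if the unit vector `u` minimizes the holomorphic sectional
curvature over unit vectors and `H(u) ≥ 0`, then for every unit vector `v` one has
`R(u,u,v,v) ≥ H(u)/2`. -/
theorem kahlerLike_eigenvalue_lower_bound {V : Type*} [NormedAddCommGroup V] [InnerProductSpace ℂ V]
    [FiniteDimensional ℂ V]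
    (R : V → V → V → V → ℂ) (hR : IsKahlerLike R)
    (u : V) (hu : ‖u‖ = 1)
    (hmin : ∀ v : V, ‖v‖ = 1 → (R u u u u).re ≤ (R v v v v).re)
    (hH : 0 ≤ (R u u u u).re) :
    ∀ v : V, ‖v‖ = 1 → (R u u u u).re / 2 ≤ (R u u v v).re := by
  have scale : ∀ (r : ℝ) (x : V),
      R ((r : ℂ) • x) ((r : ℂ) • x) ((r : ℂ) • x) ((r : ℂ) • x)
        = ((r ^ 4 : ℝ) : ℂ) * R x x x x := by
    intro r x
    rw [hR.smul1, hR.smul2, hR.smul3, hR.smul4, Complex.conj_ofReal]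
    push_cast
    ring
  have hq : ∀ w : V, ‖w‖ = 1 → (inner ℂ u w : ℂ) = 0 → ∀ t : ℝ,
      0 ≤ (4 * (R w u u u).re) * t
        + (4 * (R u u w w).re + 2 * (R w u w u).re - 2 * (R u u u u).re) * t ^ 2
        + (4 * (R u w w w).re) * t ^ 3
        + ((R w w w w).re - (R u u u u).re) * t ^ 4 := by
    intro w hw how t
    have hnx : ‖u + (t : ℂ) • w‖ ^ 2 = 1 + t ^ 2 := by
      rw [norm_add_sq (𝕜 := ℂ)]
      rw [inner_smul_right, how, mul_zero, norm_smul, hu, hw]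
      simp [sq_abs]
    set x := u + (t : ℂ) • w with hxdef
    have hx0 : 0 < ‖x‖ := by nlinarith [norm_nonneg x, sq_nonneg t]
    have hunit : ‖((‖x‖⁻¹ : ℝ) : ℂ) • x‖ = 1 := by
      rw [norm_smul, Complex.norm_real, Real.norm_eq_abs, abs_of_pos (inv_pos.mpr hx0)]
      field_simp
    have hmin' := hmin _ hunit
    rw [scale, Complex.re_ofReal_mul] at hmin'
    have hx4 : ‖x‖ ^ 4 = (1 + t ^ 2) ^ 2 := by
      rw [show (4 : ℕ) = 2 * 2 from rfl, pow_mul, hnx]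
    have hineq : (R u u u u).re * (1 + t ^ 2) ^ 2 ≤ (R x x x x).re := by
      have h1 : (R u u u u).re * ‖x‖ ^ 4 ≤ (‖x‖⁻¹ ^ 4 * (R x x x x).re) * ‖x‖ ^ 4 :=
        mul_le_mul_of_nonneg_right hmin' (by positivity)
      have h2 : (‖x‖⁻¹ ^ 4 * (R x x x x).re) * ‖x‖ ^ 4 = (R x x x x).re := by
        field_simp
      rw [h2] at h1
      rw [← hx4]
      linarith
    rw [hxdef, expand_re R hR u w t] at hineq
    nlinarith [hineq]
  have step1 : ∀ w : V, ‖w‖ = 1 → (inner ℂ u w : ℂ) = 0 →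
      (R w u u u).re = 0 ∧
        0 ≤ 4 * (R u u w w).re + 2 * (R w u w u).re - 2 * (R u u u u).re := by
    intro w hw how
    obtain ⟨hg, hb⟩ := quartic_aux _ _ _ _ (hq w hw how)
    exact ⟨by linarith, hb⟩
  have step2 : ∀ w : V, ‖w‖ = 1 → (inner ℂ u w : ℂ) = 0 →
      R w u u u = 0 ∧ (R u u u u).re / 2 ≤ (R u u w w).re := by
    intro w hw how
    have hw' : ‖Complex.I • w‖ = 1 := by
      rw [norm_smul, Complex.norm_I, one_mul, hw]
    have how' : (inner ℂ u (Complex.I • w) : ℂ) = 0 := by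
      rw [inner_smul_right, how, mul_zero]
    obtain ⟨hc1, hb1⟩ := step1 w hw how
    obtain ⟨hc2, hb2⟩ := step1 _ hw' how'
    have e1 : R (Complex.I • w) u u u = Complex.I * R w u u u := hR.smul1 _ _ _ _ _
    have e2 : R u u (Complex.I • w) (Complex.I • w) = R u u w w := by
      rw [hR.smul3, hR.smul4, Complex.conj_I,
        show Complex.I * (-Complex.I * R u u w w)
          = -(Complex.I * Complex.I) * R u u w w from by ring,
        Complex.I_mul_I]
      ring
    have e3 : R (Complex.I • w) u (Complex.I • w) u = -R w u w u := by
      rw [hR.smul1, hR.smul3,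
        show Complex.I * (Complex.I * R w u w u)
          = (Complex.I * Complex.I) * R w u w u from by ring,
        Complex.I_mul_I]
      ring
    rw [e1] at hc2
    rw [e2, e3] at hb2
    constructor
    · apply Complex.ext
      · simpa using hc1
      · have : (Complex.I * R w u u u).re = -(R w u u u).im := by
          simp [Complex.mul_re]
        rw [this] at hc2
        simpa using (by linarith : (R w u u u).im = 0)
    · have : (-R w u w u).re = -(R w u w u).re := by simp
      rw [this] at hb2
      linarith
  intro v hv
  set c : ℂ := inner ℂ u v with hc
  set p : V := v - c • u with hp
  have hup : (inner ℂ u p : ℂ) = 0 := by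
    rw [hp, inner_sub_right, inner_smul_right, inner_self_eq_norm_sq_to_K, hu]
    push_cast
    ring
  by_cases hp0 : p = 0
  · have hv' : v = c • u := by
      have := hp0
      rw [hp, sub_eq_zero] at this
      exact this
    have hcn : Complex.normSq c = 1 := by
      have h1 : ‖v‖ = ‖c‖ * ‖u‖ := by rw [hv', norm_smul]
      rw [hv, hu, mul_one] at h1
      rw [Complex.normSq_eq_norm_sq, ← h1]
      norm_num
    rw [hv', hR.smul3, hR.smul4,
      show c * ((starRingEnd ℂ) c * R u u u u) = (c * (starRingEnd ℂ) c) * R u u u u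
        from by ring,
      Complex.mul_conj, hcn]
    simp
    linarith
  · have hnp : 0 < ‖p‖ := norm_pos_iff.mpr hp0
    set w : V := ((‖p‖⁻¹ : ℝ) : ℂ) • p with hwdef
    have hw : ‖w‖ = 1 := by
      rw [hwdef, norm_smul, Complex.norm_real, Real.norm_eq_abs, abs_of_pos (inv_pos.mpr hnp)]
      field_simp
    have how : (inner ℂ u w : ℂ) = 0 := by
      rw [hwdef, inner_smul_right, hup, mul_zero]
    have hpw : ((‖p‖ : ℝ) : ℂ) • w = p := by
      rw [hwdef, smul_smul, ← Complex.ofReal_mul, mul_inv_cancel₀ (ne_of_gt hnp)]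
      simp
    obtain ⟨hC, hA⟩ := step2 w hw how
    have hv' : v = c • u + ((‖p‖ : ℝ) : ℂ) • w := by
      rw [hpw, hp]
      abel
    have hnorm : Complex.normSq c + ‖p‖ ^ 2 = 1 := by
      have hsum : c • u + p = v := by rw [hp]; abel
      have := norm_add_sq (𝕜 := ℂ) (c • u) p
      rw [hsum, hv, inner_smul_left, hup, mul_zero, norm_smul, hu, mul_one] at this
      simp only [map_zero, Complex.zero_re, mul_zero, add_zero] at this
      have hns : ‖c‖ ^ 2 = Complex.normSq c := by
        rw [Complex.sq_norm]
      rw [hns] at this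
      linarith [this.symm]
    have hz1 : R u u w u = 0 := by rw [hR.sym13 u u w u, hC]
    have hz2 : R u u u w = 0 := by
      rw [hR.symConj u u u w, hz1, map_zero]
    clear_value w
    clear hwdef how hw hpw hC
    set b : ℝ := ‖p‖ with hb
    clear_value b
    rw [hv', hR.add3, hR.add4, hR.add4, hR.smul3, hR.smul4, hR.smul3, hR.smul4,
      hR.smul3, hR.smul4, hR.smul3, hR.smul4, hz1, hz2, Complex.conj_ofReal]
    have hrw1 : (c * ((starRingEnd ℂ) c * R u u u u)).re
        = Complex.normSq c * (R u u u u).re := by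
      rw [show c * ((starRingEnd ℂ) c * R u u u u) = (c * (starRingEnd ℂ) c) * R u u u u
        from by ring, Complex.mul_conj, Complex.re_ofReal_mul]
    have hrw2 : (((b : ℝ) : ℂ) * (((b : ℝ) : ℂ) * R u u w w)).re
        = b ^ 2 * (R u u w w).re := by
      rw [show ((b : ℝ) : ℂ) * (((b : ℝ) : ℂ) * R u u w w)
          = ((b * b : ℝ) : ℂ) * R u u w w from by push_cast; ring,
        Complex.re_ofReal_mul]
      ring
    simp only [mul_zero, zero_add, add_zero, Complex.add_re, hrw1, hrw2]
    nlinarith [Complex.normSq_nonneg c, sq_nonneg b, hA, hH, hnorm]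
end

section
/- (Eigenvalue upper bound used in the proof of the paper's Theorem 3.1(2).) Let R be a Kähler-like curvature tensor on V and let u be a unit vector with H(u) ≥ H(v) for every unit vector v ∈ V, and suppose H(u) ≤ 0. Then for every unit vector v ∈ V, the real number R(u,u,v,v) satisfies R(u,u,v,v) ≤ H(u)/2. (In particular, every eigenvalue of the Hermitian form (v,w) ↦ R(u,u,v,w) on V is at most H(u)/2.) -/
namespace KahlerAux

lemma coeff_nonpos (a b c d : ℝ)
    (h : ∀ t : ℝ, 0 < t → a + b*t + c*t^2 + d*t^3 ≤ 0) : a ≤ 0 := by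
  have hc : Continuous fun t : ℝ => a + b*t + c*t^2 + d*t^3 := by continuity
  have ht : Filter.Tendsto (fun t : ℝ => a + b*t + c*t^2 + d*t^3)
      (nhdsWithin 0 (Set.Ioi 0)) (nhds a) := by
    have h0 := hc.tendsto 0
    simp only [mul_zero, add_zero, zero_pow, ne_eq, OfNat.ofNat_ne_zero,
      not_false_iff] at h0
    have := h0.mono_left (nhdsWithin_le_nhds (s := Set.Ioi (0:ℝ)))
    simpa using this
  exact le_of_tendsto ht
    (Filter.eventually_iff_exists_mem.mpr
      ⟨Set.Ioi 0, self_mem_nhdsWithin, fun t ht' => h t ht'⟩)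

lemma poly_a_nonpos (a b c d : ℝ)
    (h : ∀ t : ℝ, a*t + b*t^2 + c*t^3 + d*t^4 ≤ 0) : a ≤ 0 :=
  coeff_nonpos a b c d (fun t ht => by nlinarith [h t])

lemma poly_b_nonpos (a b c d : ℝ) (ha : a = 0)
    (h : ∀ t : ℝ, a*t + b*t^2 + c*t^3 + d*t^4 ≤ 0) : b ≤ 0 :=
  coeff_nonpos b c d 0 (fun t ht => by have h' := h t; rw [ha] at h'; nlinarith [h', mul_pos ht ht])

end KahlerAux
section
variable {V : Type*} [NormedAddCommGroup V] [InnerProductSpace ℂ V]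

local notation "conj'" => starRingEnd ℂ

lemma expand (R : V → V → V → V → ℂ) (hR : IsKahlerLike R) (u w : V) (c : ℂ) (t : ℝ) :
    R (u + ((t:ℂ)*c) • w) (u + ((t:ℂ)*c) • w) (u + ((t:ℂ)*c) • w) (u + ((t:ℂ)*c) • w)
    = R u u u u
      + (t:ℂ) * (c * R w u u u + conj' c * R u w u u + c * R u u w u + conj' c * R u u u w)
      + (t:ℂ)^2 * ((conj' c * c) * (R w w u u + R w u u w + R u w w u + R u u w w)
          + c^2 * R w u w u + (conj' c)^2 * R u w u w)
      + (t:ℂ)^3 * ((conj' c * c) * (c * (R w w w u + R w u w w)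
          + conj' c * (R w w u w + R u w w w)))
      + (t:ℂ)^4 * ((conj' c * c)^2 * R w w w w) := by
  simp only [hR.add1, hR.add2, hR.add3, hR.add4, hR.smul1, hR.smul2, hR.smul3, hR.smul4,
    map_mul, Complex.conj_ofReal]
  ring

lemma scaled_bound (R : V → V → V → V → ℂ) (hR : IsKahlerLike R) (u : V)
    (hmax : ∀ v : V, ‖v‖ = 1 → (R v v v v).re ≤ (R u u u u).re)
    (x : V) (hx : x ≠ 0) :
    (R x x x x).re ≤ (R u u u u).re * ‖x‖^4 := by
  set s : ℝ := ‖x‖⁻¹ with hs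
  have hxn : ‖x‖ ≠ 0 := norm_ne_zero_iff.mpr hx
  have hs1 : ‖(s:ℂ) • x‖ = 1 := by
    rw [norm_smul]
    simp [hs, abs_of_nonneg (norm_nonneg x), inv_mul_cancel₀ hxn]
  have h1 := hmax _ hs1
  have hexp : R ((s:ℂ)•x) ((s:ℂ)•x) ((s:ℂ)•x) ((s:ℂ)•x) = ((s^4 : ℝ):ℂ) * R x x x x := by
    rw [hR.smul1, hR.smul2, hR.smul3, hR.smul4, Complex.conj_ofReal]
    push_cast
    ring
  rw [hexp, Complex.re_ofReal_mul] at h1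
  have hs4 : s^4 * ‖x‖^4 = 1 := by
    rw [hs]
    field_simp
  have h2 := mul_le_mul_of_nonneg_right h1 (pow_nonneg (norm_nonneg x) 4)
  calc (R x x x x).re = s ^ 4 * (R x x x x).re * ‖x‖ ^ 4 := by
        rw [mul_comm (s^4), mul_assoc, hs4, mul_one]
    _ ≤ (R u u u u).re * ‖x‖ ^ 4 := h2

end
section
variable {V : Type*} [NormedAddCommGroup V] [InnerProductSpace ℂ V]

local notation "conj'" => starRingEnd ℂ

lemma step_ineq (R : V → V → V → V → ℂ) (hR : IsKahlerLike R) (u : V) (hu : ‖u‖ = 1)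
    (hmax : ∀ v : V, ‖v‖ = 1 → (R v v v v).re ≤ (R u u u u).re)
    (w : V) (hw : ‖w‖ = 1) (huw : (inner ℂ u w : ℂ) = 0)
    (c : ℂ) (hc : ‖c‖ = 1) (t : ℝ) :
    (c * R w u u u + conj' c * R u w u u + c * R u u w u + conj' c * R u u u w).re * t
    + (((conj' c * c) * (R w w u u + R w u u w + R u w w u + R u u w w)
        + c^2 * R w u w u + (conj' c)^2 * R u w u w).re - 2*(R u u u u).re) * t^2
    + ((conj' c * c) * (c * (R w w w u + R w u w w)
        + conj' c * (R w w u w + R u w w w))).re * t^3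
    + (((conj' c * c)^2 * R w w w w).re - (R u u u u).re) * t^4 ≤ 0 := by
  have hinner : (inner ℂ u (((t:ℂ)*c) • w) : ℂ) = 0 := by
    rw [inner_smul_right, huw, mul_zero]
  have hn2 : ‖u + ((t:ℂ)*c)•w‖^2 = 1 + t^2 := by
    have := norm_add_sq_eq_norm_sq_add_norm_sq_of_inner_eq_zero _ _ hinner
    rw [hu, norm_smul, hw, norm_mul, Complex.norm_real, hc] at this
    rw [pow_two, this]
    simp [abs_mul_abs_self]
    ring
  have hx0 : (u + ((t:ℂ)*c)•w) ≠ 0 := by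
    intro h0
    rw [h0, norm_zero] at hn2
    nlinarith [sq_nonneg t]
  have hsb := scaled_bound R hR u hmax _ hx0
  rw [expand R hR u w c t] at hsb
  have h4 : ‖u + ((t:ℂ)*c)•w‖^4 = (1+t^2)^2 := by
    rw [show (4:ℕ) = 2*2 from rfl, pow_mul, hn2]
  rw [h4] at hsb
  simp only [Complex.add_re, ← Complex.ofReal_pow, Complex.re_ofReal_mul] at hsb ⊢
  linarith [hsb]

end
section
variable {V : Type*} [NormedAddCommGroup V] [InnerProductSpace ℂ V]

local notation "conj'" => starRingEnd ℂ

lemma A_zero (R : V → V → V → V → ℂ) (hR : IsKahlerLike R) (u : V) (hu : ‖u‖ = 1)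
    (hmax : ∀ v : V, ‖v‖ = 1 → (R v v v v).re ≤ (R u u u u).re)
    (w : V) (hw : ‖w‖ = 1) (huw : (inner ℂ u w : ℂ) = 0) :
    R u u w u = 0 := by
  have hA1 : R w u u u = R u u w u := hR.sym13 w u u u
  have hA2 : R u w u u = conj' (R u u w u) := by
    rw [hR.symConj u w u u, hA1]
  have hA3 : R u u u w = conj' (R u u w u) := hR.symConj u u u w
  have key : ∀ c : ℂ, ‖c‖ = 1 →
      (c * R u u w u + conj' c * conj' (R u u w u) + c * R u u w u
        + conj' c * conj' (R u u w u)).re ≤ 0 := by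
    intro c hc
    have h := KahlerAux.poly_a_nonpos _ _ _ _
      (fun t => step_ineq R hR u hu hmax w hw huw c hc t)
    rwa [hA1, hA2, hA3] at h
  have h1 := key 1 (by simp)
  have h2 := key (-1) (by simp)
  have h3 := key Complex.I (by simp)
  have h4 := key (-Complex.I) (by simp)
  simp only [Complex.add_re, Complex.mul_re, Complex.conj_re, Complex.conj_im,
    Complex.I_re, Complex.I_im, Complex.neg_re, Complex.neg_im, Complex.one_re,
    Complex.one_im, map_one, map_neg, Complex.conj_I] at h1 h2 h3 h4
  apply Complex.ext <;> simp <;> linarith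

lemma B_bound (R : V → V → V → V → ℂ) (hR : IsKahlerLike R) (u : V) (hu : ‖u‖ = 1)
    (hmax : ∀ v : V, ‖v‖ = 1 → (R v v v v).re ≤ (R u u u u).re)
    (w : V) (hw : ‖w‖ = 1) (huw : (inner ℂ u w : ℂ) = 0) :
    (R u u w w).re ≤ (R u u u u).re / 2 := by
  have hA : R u u w u = 0 := A_zero R hR u hu hmax w hw huw
  have hA1 : R w u u u = 0 := by rw [hR.sym13 w u u u, hA]
  have hA2 : R u w u u = 0 := by rw [hR.symConj u w u u, hA1, map_zero]
  have hA3 : R u u u w = 0 := by rw [hR.symConj u u u w, hA, map_zero]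
  have hC : R u w u w = conj' (R w u w u) := hR.symConj u w u w
  have hS1 : R w w u u = R u w w u := hR.sym13 w w u u
  have hS2 : R u w w u = conj' (R w u u w) := hR.symConj u w w u
  have hS3 : R w u u w = R u u w w := hR.sym13 w u u w
  -- b-coefficient nonpositivity for c = 1 and c = I
  have hb : ∀ c : ℂ, ‖c‖ = 1 →
      ((conj' c * c) * (R w w u u + R w u u w + R u w w u + R u u w w)
        + c^2 * R w u w u + (conj' c)^2 * R u w u w).re - 2*(R u u u u).re ≤ 0 := by
    intro c hc
    apply KahlerAux.poly_b_nonpos _ _ _ _ _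
      (fun t => step_ineq R hR u hu hmax w hw huw c hc t)
    rw [hA1, hA2, hA3, hA]
    simp
  have hb1 := hb 1 (by simp)
  have hb2 := hb Complex.I (by simp)
  have e1 : (conj' (1:ℂ) * 1) * (R w w u u + R w u u w + R u w w u + R u u w w)
      + (1:ℂ)^2 * R w u w u + (conj' (1:ℂ))^2 * R u w u w
      = (R w w u u + R w u u w + R u w w u + R u u w w) + R w u w u + R u w u w := by
    simp
  have e2 : (conj' Complex.I * Complex.I) * (R w w u u + R w u u w + R u w w u + R u u w w)
      + Complex.I^2 * R w u w u + (conj' Complex.I)^2 * R u w u w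
      = (R w w u u + R w u u w + R u w w u + R u u w w) - R w u w u - R u w u w := by
    rw [Complex.conj_I]
    ring_nf
    simp [Complex.I_sq]
    ring
  rw [e1] at hb1
  rw [e2] at hb2
  have r1 : (R w w u u).re = (R u u w w).re := by
    rw [hS1, hS2, Complex.conj_re, hS3]
  have r2 : (R w u u w).re = (R u u w w).re := by rw [hS3]
  have r3 : (R u w w u).re = (R u u w w).re := by
    rw [hS2, Complex.conj_re, hS3]
  simp only [Complex.add_re, Complex.sub_re] at hb1 hb2
  linarith [hb1, hb2, r1, r2, r3]

end

/-- Eigenvalue upper bound: if the unit vector `u` maximizes the holomorphic sectional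
curvature over unit vectors and `H(u) ≤ 0`, then for every unit vector `v` one has
`R(u,u,v,v) ≤ H(u)/2`. -/
theorem kahlerLike_eigenvalue_upper_bound {V : Type*} [NormedAddCommGroup V] [InnerProductSpace ℂ V]
    [FiniteDimensional ℂ V]
    (R : V → V → V → V → ℂ) (hR : IsKahlerLike R)
    (u : V) (hu : ‖u‖ = 1)
    (hmax : ∀ v : V, ‖v‖ = 1 → (R v v v v).re ≤ (R u u u u).re)
    (hH : (R u u u u).re ≤ 0) :
    ∀ v : V, ‖v‖ = 1 → (R u u v v).re ≤ (R u u u u).re / 2 := by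
  intro v hv
  have hu1 : (inner ℂ u u : ℂ) = 1 := by
    rw [inner_self_eq_norm_sq_to_K, hu]
    norm_num
  obtain ⟨a, ha⟩ : ∃ a : ℂ, a = (inner ℂ u v : ℂ) := ⟨_, rfl⟩
  obtain ⟨w', hw'⟩ : ∃ w' : V, w' = v - a • u := ⟨_, rfl⟩
  have hinner_uw' : (inner ℂ u w' : ℂ) = 0 := by
    rw [hw', inner_sub_right, inner_smul_right, hu1, mul_one, ← ha, sub_self]
  by_cases hw0 : w' = 0
  · -- v = a • u with ‖a‖ = 1
    have hva : v = a • u := by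
      rw [hw'] at hw0
      exact sub_eq_zero.mp hw0
    have hna : ‖a‖ = 1 := by
      rw [hva, norm_smul, hu, mul_one] at hv
      exact hv
    have hexp : R u u v v = ((‖a‖^2 : ℝ) : ℂ) * R u u u u := by
      rw [hva, hR.smul3, hR.smul4]
      rw [show ((‖a‖^2 : ℝ) : ℂ) = a * (starRingEnd ℂ) a from by
        rw [Complex.mul_conj, Complex.normSq_eq_norm_sq]]
      ring
    rw [hexp, Complex.re_ofReal_mul, hna]
    norm_num
    linarith
  · -- orthogonal component
    have hwn0 : ‖w'‖ ≠ 0 := norm_ne_zero_iff.mpr hw0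
    obtain ⟨w, hwdef⟩ : ∃ w : V, w = (((‖w'‖ : ℝ) : ℂ))⁻¹ • w' := ⟨_, rfl⟩
    have hw : ‖w‖ = 1 := by
      rw [hwdef, norm_smul, norm_inv, Complex.norm_real, norm_norm,
        inv_mul_cancel₀ hwn0]
    have huw : (inner ℂ u w : ℂ) = 0 := by
      rw [hwdef, inner_smul_right, hinner_uw', mul_zero]
    have hbw : ((‖w'‖ : ℝ) : ℂ) • w = w' := by
      rw [hwdef, smul_smul, mul_inv_cancel₀ (by exact_mod_cast hwn0), one_smul]
    have hvd : v = a • u + ((‖w'‖ : ℝ) : ℂ) • w := by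
      rw [hbw, hw']
      abel
    have hnormsum : ‖a‖^2 + ‖w'‖^2 = 1 := by
      have hp := norm_add_sq_eq_norm_sq_add_norm_sq_of_inner_eq_zero (a • u) w'
        (by rw [inner_smul_left, hinner_uw', mul_zero])
      have hvv : a • u + w' = v := by rw [hw']; abel
      rw [hvv, hv, norm_smul, hu, mul_one] at hp
      nlinarith [hp]
    have hA : R u u w u = 0 := A_zero R hR u hu hmax w hw huw
    have hA3 : R u u u w = 0 := by rw [hR.symConj u u u w, hA, map_zero]
    have hB : (R u u w w).re ≤ (R u u u u).re / 2 := B_bound R hR u hu hmax w hw huw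
    have hexp : R u u v v = ((‖a‖^2 : ℝ) : ℂ) * R u u u u + ((‖w'‖^2 : ℝ) : ℂ) * R u u w w := by
      rw [hvd]
      simp only [hR.add3, hR.add4, hR.smul3, hR.smul4, hA, hA3, mul_zero, zero_mul,
        add_zero, zero_add, Complex.conj_ofReal]
      rw [show ((‖a‖^2 : ℝ) : ℂ) = a * (starRingEnd ℂ) a from by
        rw [Complex.mul_conj, Complex.normSq_eq_norm_sq]]
      push_cast
      ring
    rw [hexp]
    simp only [Complex.add_re, Complex.re_ofReal_mul]
    nlinarith [hB, hH, hnormsum, pow_nonneg (norm_nonneg w') 2, pow_nonneg (norm_nonneg a) 2,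
      mul_le_mul_of_nonneg_left hB (pow_nonneg (norm_nonneg w') 2)]
end
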